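/- arXiv:2512.16833 — 2 statements merged into one kernel-verified Lean document; each statement's English description precedes it below -/
import Mathlib

section
/- For every real number w with 0 < w < 1, every real number b, every real number a ≥ 0, and every real number t with t ≥ a, |t² − b²|/(w·exp(t) + (1−w)·exp(−t))² ≤ (1 + b²)·exp(−a)/(min{w, 1−w})². -/
open Real

/-! The mixture `w eᵗ + (1 - w) e⁻ᵗ` is at least `min w (1 - w) · eᵗ`, while the numerator
`|t² - b²| ≤ t² + b²` is at most `(1 + b²) eᵗ ≤ (1 + b²) e^{2t - a}` because `t² ≤ eᵗ` for `t ≥ 0`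
and `a ≤ t`. Dividing, the factor `e^{2t}` cancels. -/

lemma abs_sq_sub_sq_le_sq_add_sq (x y : ℝ) : |x ^ 2 - y ^ 2| ≤ x ^ 2 + y ^ 2 :=
  (abs_sub _ _).trans_eq (by rw [abs_sq, abs_sq])

lemma sq_le_exp_of_nonneg {t : ℝ} (ht : 0 ≤ t) : t ^ 2 ≤ exp t := by
  have h := sum_le_exp_of_nonneg ht 4
  norm_num [Finset.sum_range_succ, Nat.factorial] at h
  -- `1 + t + t²/2 + t³/6 - t² = t (t - 2)²/6 + 1 + t/3 + t²/6`
  nlinarith [mul_nonneg ht (sq_nonneg (t - 2))]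

lemma min_mul_exp_le_mixture {w : ℝ} (hw : w ≤ 1) (t : ℝ) :
    min w (1 - w) * exp t ≤ w * exp t + (1 - w) * exp (-t) := by
  have h₁ : min w (1 - w) * exp t ≤ w * exp t := by gcongr; exact min_le_left _ _
  have h₂ : 0 ≤ (1 - w) * exp (-t) :=
    mul_nonneg (by linarith) (exp_pos _).le
  linarith

lemma sq_add_sq_le_mul_exp {a t : ℝ} (ha : 0 ≤ a) (hat : a ≤ t) (b : ℝ) :
    t ^ 2 + b ^ 2 ≤ (1 + b ^ 2) * exp (-a) * exp t ^ 2 := by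
  have ht : 0 ≤ t := ha.trans hat
  have hexp : exp t ≤ exp (-a) * exp t ^ 2 := by
    rw [sq, ← exp_add, ← exp_add]
    exact exp_le_exp.2 (by linarith)
  have h₁ : 1 ≤ exp (-a) * exp t ^ 2 := (one_le_exp ht).trans hexp
  have h₂ : t ^ 2 ≤ exp (-a) * exp t ^ 2 := (sq_le_exp_of_nonneg ht).trans hexp
  nlinarith [mul_le_mul_of_nonneg_left h₁ (sq_nonneg b)]

/-- Tail bound on `f₃(t) = (t² − b²)·(w·eᵗ + (1−w)·e^{−t})^{−2}` over `[a, ∞)`: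
for `w ∈ (0,1)`, any real `b`, `a ≥ 0` and `t ≥ a`,
`|f₃(t)| ≤ (1+b²)·exp(−a)/(min{w,1−w})²`. -/
theorem f3_tail_bound (w b a t : ℝ) (hw0 : 0 < w) (hw1 : w < 1)
    (ha : 0 ≤ a) (hta : a ≤ t) :
    |t ^ 2 - b ^ 2| / (w * Real.exp t + (1 - w) * Real.exp (-t)) ^ 2
      ≤ (1 + b ^ 2) * Real.exp (-a) / (min w (1 - w)) ^ 2 := by
  have hm : 0 < min w (1 - w) := lt_min hw0 (by linarith)
  calc |t ^ 2 - b ^ 2| / (w * exp t + (1 - w) * exp (-t)) ^ 2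
      ≤ (t ^ 2 + b ^ 2) / (min w (1 - w) * exp t) ^ 2 := by
        gcongr
        · exact abs_sq_sub_sq_le_sq_add_sq t b
        · exact min_mul_exp_le_mixture hw1.le t
    _ ≤ (1 + b ^ 2) * exp (-a) * exp t ^ 2 / (min w (1 - w) * exp t) ^ 2 := by
        gcongr
        exact sq_add_sq_le_mul_exp ha hta b
    _ = (1 + b ^ 2) * exp (-a) / (min w (1 - w)) ^ 2 := by
        field_simp
end

section
/- For every real number w with 0 < w < 1, every real number δ, and every real number σ > 0, ∫ℝ (w·exp(δ + σ·z) + (1−w)·exp(−(δ + σ·z)))^{−2} dγ(z) ≤ (exp(−|δ|) + exp(−δ²/(8·σ²)))/(min{w, 1−w})², where γ is the standard Gaussian measure N(0,1) on ℝ. -/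
/-!
The integrand is at most `exp (-2 |δ + σ z|) / m²` with `m = min w (1 - w)`, hence at most `1 / m²`.
Off the event `|σ z| > |δ| / 2` we have `2 |δ + σ z| ≥ |δ|`, so there it is at most
`exp (-|δ|) / m²`, and the event has probability at most `exp (-δ² / (8 σ²))` by the tail bound
`P(|Z| > c) ≤ exp (-c² / 2)`. That bound comes from comparing the standard density on `(c, ∞)`
with the density of `N(c, 1)`, which gives `(c, ∞)` mass `1 / 2`, and symmetrically on `(-∞, -c)`.
-/

open MeasureTheory ProbabilityTheory Real Set

-- `gaussianPDFReal 0 1 x = exp (c ^ 2 / 2 - c * x) * gaussianPDFReal c 1 x`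
lemma gaussianPDFReal_zero_one_le {c x : ℝ} (h : c ^ 2 ≤ c * x) :
    gaussianPDFReal 0 1 x ≤ exp (-c ^ 2 / 2) * gaussianPDFReal c 1 x := by
  simp only [gaussianPDFReal, NNReal.coe_one, mul_one, sub_zero]
  rw [mul_left_comm, ← exp_add]
  gcongr
  nlinarith

lemma gaussianReal_le_ofReal_exp_mul {c : ℝ} {s : Set ℝ} (hs : MeasurableSet s)
    (h : ∀ x ∈ s, c ^ 2 ≤ c * x) :
    gaussianReal 0 1 s ≤ ENNReal.ofReal (exp (-c ^ 2 / 2)) * gaussianReal c 1 s := by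
  rw [gaussianReal_apply _ one_ne_zero, gaussianReal_apply _ one_ne_zero,
    ← lintegral_const_mul _ (measurable_gaussianPDF _ _)]
  refine setLIntegral_mono' hs fun x hx => ?_
  rw [gaussianPDF_def, gaussianPDF_def, ← ENNReal.ofReal_mul (exp_nonneg _)]
  exact ENNReal.ofReal_le_ofReal (gaussianPDFReal_zero_one_le (h x hx))

lemma gaussianReal_Iio_self (μ : ℝ) (v : NNReal) :
    gaussianReal μ v (Iio μ) = gaussianReal μ v (Ioi μ) := by
  have h := gaussianReal_map_const_sub (μ := μ) (v := v) (2 * μ)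
  rw [two_mul, add_sub_cancel_right] at h
  conv_lhs => rw [← h, Measure.map_apply (by fun_prop) measurableSet_Iio]
  congr 1
  ext x
  simp only [mem_preimage, mem_Iio, mem_Ioi]
  constructor <;> intro <;> linarith

lemma gaussianReal_Ioi_self (μ : ℝ) {v : NNReal} (hv : v ≠ 0) :
    gaussianReal μ v (Ioi μ) = 2⁻¹ := by
  have := nullSingletonClass_gaussianReal (μ := μ) hv
  have h := measure_add_measure_compl (μ := gaussianReal μ v) (measurableSet_Ioi (a := μ))
  rw [compl_Ioi, measure_congr Iio_ae_eq_Iic.symm, gaussianReal_Iio_self, measure_univ,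
    ← two_mul] at h
  exact ENNReal.eq_inv_of_mul_eq_one_left (by rwa [mul_comm])

lemma gaussianReal_real_lt_abs_le {c : ℝ} (hc : 0 ≤ c) :
    (gaussianReal 0 1).real {z | c < |z|} ≤ exp (-c ^ 2 / 2) := by
  have hset : {z : ℝ | c < |z|} = Iio (-c) ∪ Ioi c := by
    ext z
    simp only [mem_ofPred_eq, mem_union, mem_Iio, mem_Ioi, lt_abs, lt_neg, or_comm]
  refine ENNReal.toReal_le_of_le_ofReal (exp_nonneg _) ?_
  calc gaussianReal 0 1 {z | c < |z|}
      ≤ gaussianReal 0 1 (Iio (-c)) + gaussianReal 0 1 (Ioi c) := hset ▸ measure_union_le _ _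
    _ ≤ ENNReal.ofReal (exp (-c ^ 2 / 2)) * gaussianReal (-c) 1 (Iio (-c))
        + ENNReal.ofReal (exp (-c ^ 2 / 2)) * gaussianReal c 1 (Ioi c) := by
      gcongr
      · simpa using gaussianReal_le_ofReal_exp_mul (c := -c) measurableSet_Iio
          fun x (hx : x < -c) => by nlinarith
      · exact gaussianReal_le_ofReal_exp_mul measurableSet_Ioi
          fun x (hx : c < x) => by nlinarith
    _ = ENNReal.ofReal (exp (-c ^ 2 / 2)) := by
      rw [gaussianReal_Iio_self, gaussianReal_Ioi_self _ one_ne_zero,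
        gaussianReal_Ioi_self _ one_ne_zero, ← mul_add, ENNReal.inv_two_add_inv_two, mul_one]

lemma integral_le_add_mul_measureReal {α : Type*} [MeasurableSpace α] {μ : Measure α}
    [IsProbabilityMeasure μ] {f : α → ℝ} {s : Set α} {a b : ℝ} (hs : MeasurableSet s)
    (hf : 0 ≤ f) (ha : 0 ≤ a) (hf_le : ∀ x, f x ≤ b) (hf_le_of_notMem : ∀ x ∉ s, f x ≤ a) :
    ∫ x, f x ∂μ ≤ a + b * μ.real s := by
  have hg : Integrable (fun x => a + s.indicator (fun _ => b) x) μ :=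
    (integrable_const a).add ((integrable_const b).indicator hs)
  calc ∫ x, f x ∂μ ≤ ∫ x, a + s.indicator (fun _ => b) x ∂μ := by
        refine integral_mono_of_nonneg (ae_of_all _ hf) hg (ae_of_all _ fun x => ?_)
        by_cases hx : x ∈ s
        · simpa [hx] using (hf_le x).trans (le_add_of_nonneg_left ha)
        · simpa [hx] using hf_le_of_notMem x hx
    _ = a + b * μ.real s := by
      rw [integral_add (integrable_const a) ((integrable_const b).indicator hs),
        integral_const, integral_indicator_const _ hs]
      simp [mul_comm]

lemma min_mul_exp_abs_le {w : ℝ} (hw0 : 0 ≤ w) (hw1 : w ≤ 1) (t : ℝ) :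
    min w (1 - w) * exp |t| ≤ w * exp t + (1 - w) * exp (-t) := by
  rcases le_total 0 t with ht | ht
  · rw [abs_of_nonneg ht]
    linarith [mul_le_mul_of_nonneg_right (min_le_left w (1 - w)) (exp_pos t).le,
      mul_nonneg (sub_nonneg.2 hw1) (exp_pos (-t)).le]
  · rw [abs_of_nonpos ht]
    linarith [mul_le_mul_of_nonneg_right (min_le_right w (1 - w)) (exp_pos (-t)).le,
      mul_nonneg hw0 (exp_pos t).le]

lemma inv_sq_weighted_exp_le {w s t : ℝ} (hw0 : 0 < w) (hw1 : w < 1) (h : s ≤ 2 * |t|) :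
    ((w * exp t + (1 - w) * exp (-t)) ^ 2)⁻¹ ≤ exp (-s) / min w (1 - w) ^ 2 := by
  have hm : 0 < min w (1 - w) := lt_min hw0 (by linarith)
  calc ((w * exp t + (1 - w) * exp (-t)) ^ 2)⁻¹ ≤ ((min w (1 - w) * exp |t|) ^ 2)⁻¹ := by
        gcongr
        exact min_mul_exp_abs_le hw0.le hw1.le t
    _ = exp (-(2 * |t|)) / min w (1 - w) ^ 2 := by
      rw [mul_pow, ← exp_nat_mul, exp_neg]
      field_simp
      push_cast; ring_nf
    _ ≤ exp (-s) / min w (1 - w) ^ 2 := by gcongr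

/-- Intermediate Gaussian expectation bound: for `w ∈ (0,1)`, any `δ` and `σ > 0`,
`E[(w·e^{δ+σZ} + (1−w)·e^{−(δ+σZ)})^{−2}]
  ≤ (exp(−|δ|) + exp(−δ²/(8σ²)))/(min{w,1−w})²` for `Z ∼ N(0,1)`. -/
theorem gaussian_f1_expectation_bound (w δ σ : ℝ)
    (hw0 : 0 < w) (hw1 : w < 1) (hσ : 0 < σ) :
    ∫ z, ((w * Real.exp (δ + σ * z) + (1 - w) * Real.exp (-(δ + σ * z))) ^ 2)⁻¹
        ∂(gaussianReal 0 1)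
      ≤ (Real.exp (-|δ|) + Real.exp (-δ ^ 2 / (8 * σ ^ 2))) / (min w (1 - w)) ^ 2 := by
  set c := |δ| / (2 * σ)
  have hS : MeasurableSet {z : ℝ | c < |z|} := measurableSet_lt measurable_const measurable_abs
  have h_le_of_notMem : ∀ z ∉ {z : ℝ | c < |z|},
      ((w * exp (δ + σ * z) + (1 - w) * exp (-(δ + σ * z))) ^ 2)⁻¹
        ≤ exp (-|δ|) / min w (1 - w) ^ 2 := by
    intro z hz
    rw [mem_ofPred_eq, not_lt, le_div_iff₀ (by positivity)] at hz
    have h_tri := abs_sub (δ + σ * z) (σ * z)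
    rw [add_sub_cancel_right, abs_mul, abs_of_pos hσ] at h_tri
    exact inv_sq_weighted_exp_le hw0 hw1 (by linarith)
  have h_tail : (gaussianReal 0 1).real {z | c < |z|} ≤ exp (-δ ^ 2 / (8 * σ ^ 2)) := by
    convert gaussianReal_real_lt_abs_le (by positivity : 0 ≤ c) using 2
    rw [div_pow, mul_pow, sq_abs]
    field_simp
    ring
  calc _ ≤ exp (-|δ|) / min w (1 - w) ^ 2
        + 1 / min w (1 - w) ^ 2 * (gaussianReal 0 1).real {z | c < |z|} :=
        integral_le_add_mul_measureReal hS (fun z => by positivity) (by positivity)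
          (fun z => by
            simpa using inv_sq_weighted_exp_le (s := 0) (t := δ + σ * z) hw0 hw1 (by positivity))
          h_le_of_notMem
    _ ≤ (exp (-|δ|) + exp (-δ ^ 2 / (8 * σ ^ 2))) / min w (1 - w) ^ 2 := by
      rw [add_div, one_div_mul_eq_div]
      gcongr
end
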